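/- (Abstract form of Theorem 2.2: convergence of outputs under partial strict output passivity.) Let H and Y be complex Hilbert spaces, D ⊆ H, M : D → H a monotone map, N : H → H a continuous linear map with Re⟪x, N x⟫ ≥ 0 for all x ∈ H, and λ > 0; assume I + λN is bijective with inverse R. Let G : D → Y be a map and ε > 0 be such that Re⟪u − v, M u − M v⟫ ≥ ε · ‖G u − G v‖² for all u, v ∈ D. Let p ∈ D satisfy M p + N p = 0, set w := p + λ • M p, let (p_k) be a sequence in D with w_k := p_k + λ • M p_k and w_{k+1} = (I − λN)(R (p_k − λ • M p_k)) for all k. Then ‖G p_k − G p‖² ≤ (1/(4λε)) · (‖w_k − w‖² − ‖w_{k+1} − w‖²) for every k, and ‖G p_k − G p‖ → 0 as k → ∞. -/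

import Mathlib

lemma key_diff {H : Type*} [NormedAddCommGroup H] [InnerProductSpace ℂ H]
    (x y : H) : ‖x + y‖ ^ 2 - ‖x - y‖ ^ 2 = 4 * (inner ℂ x y : ℂ).re := by
  have h1 := norm_add_sq (𝕜 := ℂ) x y
  have h2 := norm_sub_sq (𝕜 := ℂ) x y
  simp only [RCLike.re_to_complex] at h1 h2
  rw [h1, h2]; ring

lemma re_inner_smul_right' {H : Type*} [NormedAddCommGroup H] [InnerProductSpace ℂ H]
    (x y : H) (r : ℝ) : (inner ℂ x (r • y) : ℂ).re = r * (inner ℂ x y : ℂ).re := by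
  rw [RCLike.real_smul_eq_coe_smul (K := ℂ), inner_smul_right]
  simp

/-- Theorem 2.2, abstract form: convergence of outputs under partial strict output
passivity. -/
theorem stmt11 {H Y : Type*} [NormedAddCommGroup H] [InnerProductSpace ℂ H] [CompleteSpace H]
    [NormedAddCommGroup Y] [InnerProductSpace ℂ Y] [CompleteSpace Y]
    (D : Set H) (M : H → H)
    (hmono : ∀ u ∈ D, ∀ v ∈ D, 0 ≤ (inner ℂ (u - v) (M u - M v) : ℂ).re)
    (N : H →L[ℂ] H) (hN : ∀ x : H, 0 ≤ (inner ℂ x (N x) : ℂ).re)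
    (l : ℝ) (hl : 0 < l)
    (hbij : Function.Bijective (fun x : H => x + l • N x))
    (R : H → H) (hR : ∀ y : H, R y + l • N (R y) = y)
    (G : H → Y) (ε : ℝ) (hε : 0 < ε)
    (hpsop : ∀ u ∈ D, ∀ v ∈ D,
      ε * ‖G u - G v‖ ^ 2 ≤ (inner ℂ (u - v) (M u - M v) : ℂ).re)
    (p : H) (hp : p ∈ D) (hsol : M p + N p = 0)
    (pseq : ℕ → H) (hpD : ∀ k, pseq k ∈ D)
    (wseq : ℕ → H) (hw : ∀ k, wseq k = pseq k + l • M (pseq k))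
    (hrec : ∀ k, wseq (k + 1)
      = R (pseq k - l • M (pseq k)) - l • N (R (pseq k - l • M (pseq k)))) :
    (∀ k : ℕ,
      ‖G (pseq k) - G p‖ ^ 2
        ≤ (1 / (4 * l * ε))
          * (‖wseq k - (p + l • M p)‖ ^ 2 - ‖wseq (k + 1) - (p + l • M p)‖ ^ 2)) ∧
    Filter.Tendsto (fun k => ‖G (pseq k) - G p‖) Filter.atTop (nhds 0) := by
  have hMp : M p = -(N p) := eq_neg_of_add_eq_zero_left hsol
  set w : H := p + l • M p with hwdef
  set a : ℕ → ℝ := fun k => ‖wseq k - w‖ ^ 2 with hadef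
  -- key step inequality
  have hkey : ∀ k, 4 * l * ε * ‖G (pseq k) - G p‖ ^ 2 ≤ a k - a (k + 1) := by
    intro k
    set z : H := R (pseq k - l • M (pseq k)) with hzdef
    have hz : z + l • N z = pseq k - l • M (pseq k) := hR _
    have e1 : wseq k - w = (pseq k - p) + l • (M (pseq k) - M p) := by
      rw [hw k, hwdef]; module
    have e2 : wseq (k + 1) - w = (z - p) - l • (N z - N p) := by
      rw [hrec k, ← hzdef, hwdef, hMp]; module
    have e3 : (z - p) + l • (N z - N p) = (pseq k - p) - l • (M (pseq k) - M p) := by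
      have h0 : (z - p) + l • (N z - N p) = (z + l • N z) - (p + l • N p) := by module
      rw [h0, hz]
      rw [show (N p : H) = -(M p) by rw [hMp]; simp]
      module
    -- a k in terms of A, B
    have d1 : a k - ‖(pseq k - p) - l • (M (pseq k) - M p)‖ ^ 2
        = 4 * l * (inner ℂ (pseq k - p) (M (pseq k) - M p) : ℂ).re := by
      have := key_diff (pseq k - p) (l • (M (pseq k) - M p))
      rw [re_inner_smul_right'] at this
      rw [hadef]; simp only [e1]
      linarith
    -- a (k+1) bound
    have d2 : a (k + 1) ≤ ‖(pseq k - p) - l • (M (pseq k) - M p)‖ ^ 2 := by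
      have hkd := key_diff (z - p) (l • (N z - N p))
      rw [e3, re_inner_smul_right'] at hkd
      have hnn : 0 ≤ (inner ℂ (z - p) (N z - N p) : ℂ).re := by
        rw [← map_sub]; exact hN _
      have : a (k + 1) = ‖(z - p) - l • (N z - N p)‖ ^ 2 := by rw [hadef]; simp only [e2]
      nlinarith
    have hps := hpsop (pseq k) (hpD k) p hp
    nlinarith
  have hc : (0 : ℝ) < 4 * l * ε := by positivity
  have part1 : ∀ k : ℕ,
      ‖G (pseq k) - G p‖ ^ 2 ≤ (1 / (4 * l * ε)) * (a k - a (k + 1)) := by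
    intro k
    rw [one_div, inv_mul_eq_div, le_div_iff₀ hc]
    have := hkey k; nlinarith
  refine ⟨part1, ?_⟩
  -- convergence
  have hanti : Antitone a := by
    apply antitone_nat_of_succ_le
    intro k
    have := hkey k
    nlinarith [sq_nonneg ‖G (pseq k) - G p‖]
  have hbdd : BddBelow (Set.range a) := ⟨0, by rintro x ⟨k, rfl⟩; positivity⟩
  have hL : Filter.Tendsto a Filter.atTop (nhds (⨅ k, a k)) :=
    tendsto_atTop_ciInf hanti hbdd
  have hL1 : Filter.Tendsto (fun k => a (k + 1)) Filter.atTop (nhds (⨅ k, a k)) :=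
    hL.comp (Filter.tendsto_add_atTop_nat 1)
  have hdiff : Filter.Tendsto (fun k => a k - a (k + 1)) Filter.atTop (nhds 0) := by
    have := hL.sub hL1
    simpa using this
  have hsq : Filter.Tendsto (fun k => ‖G (pseq k) - G p‖ ^ 2) Filter.atTop (nhds 0) := by
    apply squeeze_zero (fun k => by positivity) part1
    have := hdiff.const_mul (1 / (4 * l * ε))
    simpa using this
  have h2 : Filter.Tendsto (fun k => Real.sqrt (‖G (pseq k) - G p‖ ^ 2))
      Filter.atTop (nhds (Real.sqrt 0)) :=
    (Real.continuous_sqrt.tendsto 0).comp hsq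
  have heq : (fun k => Real.sqrt (‖G (pseq k) - G p‖ ^ 2))
      = fun k => ‖G (pseq k) - G p‖ :=
    funext fun k => Real.sqrt_sq (norm_nonneg _)
  rw [heq, Real.sqrt_zero] at h2
  exact h2
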